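/- arXiv:2412.18462 — 5 statements merged into one kernel-verified Lean document; each statement's English description precedes it below -/
import Mathlib

section
/- Let r > 0, b > 0, and let w be a nonnegative C² function defined on an open neighborhood of the closed disk of radius r centered at 0 in ℝ², such that Δw ≥ −b on the open disk D²(r), where Δ denotes the Laplacian. Then w(0) ≤ b·r²/8 + (1/(π·r²))·∫_{D²(r)} w dA, where dA denotes 2-dimensional Lebesgue measure. -/
open MeasureTheory Real

/-- The Laplacian of a function `w : ℂ → ℝ`, computed as the sum of the second
directional derivatives in the directions `1` and `i` (i.e. `∂²w/∂x² + ∂²w/∂y²`). -/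
noncomputable def lap (w : ℂ → ℝ) (z : ℂ) : ℝ :=
  fderiv ℝ (fun y => fderiv ℝ w y 1) z 1 +
    fderiv ℝ (fun y => fderiv ℝ w y Complex.I) z Complex.I

namespace MVAux

open Complex

noncomputable def e (θ : ℝ) : ℂ := Real.cos θ + Real.sin θ * I

noncomputable def c (ρ θ : ℝ) : ℂ := (ρ : ℂ) * e θ

lemma abs_e (θ : ℝ) : ‖e θ‖ = 1 := by
  have := Complex.norm_cos_add_sin_mul_I θ
  rw [e, Complex.ofReal_cos, Complex.ofReal_sin]
  exact this

lemma norm_e (θ : ℝ) : ‖e θ‖ = 1 := abs_e θ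

lemma abs_c (ρ θ : ℝ) : ‖c ρ θ‖ = |ρ| := by
  rw [c, norm_mul, abs_e, Complex.norm_real, Real.norm_eq_abs, mul_one]

lemma e_pi : e π = -1 := by simp [e]

lemma e_neg_pi : e (-π) = -1 := by simp [e]

lemma continuous_e : Continuous e := by
  unfold e; fun_prop

lemma hasDerivAt_e (θ : ℝ) : HasDerivAt e (I * e θ) θ := by
  have h1 : HasDerivAt (fun θ : ℝ => (Real.cos θ : ℂ)) (-Real.sin θ : ℝ) θ :=
    (Real.hasDerivAt_cos θ).ofReal_comp
  have h2 : HasDerivAt (fun θ : ℝ => (Real.sin θ : ℂ) * I) ((Real.cos θ : ℝ) * I) θ :=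
    ((Real.hasDerivAt_sin θ).ofReal_comp).mul_const I
  have := h1.add h2
  have hd : I * e θ = ((-Real.sin θ : ℝ) : ℂ) + (Real.cos θ : ℝ) * I := by
    simp [e]
    ring_nf
    rw [Complex.I_sq]
    ring
  exact this.congr_deriv hd.symm

lemma hasDerivAt_c (ρ θ : ℝ) : HasDerivAt (fun θ => c ρ θ) ((ρ : ℂ) * (I * e θ)) θ :=
  (hasDerivAt_e θ).const_mul _

lemma hasDerivAt_c_rho (ρ θ : ℝ) : HasDerivAt (fun ρ : ℝ => c ρ θ) (e θ) ρ := by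
  have h : HasDerivAt (fun ρ : ℝ => (ρ : ℂ)) 1 ρ := by
    exact Complex.ofRealCLM.hasDerivAt (x := ρ)
  exact (h.mul_const (e θ)).congr_deriv (one_mul _)

section calculus

variable {w : ℂ → ℝ} {U : Set ℂ} (hU : IsOpen U) (hw : ContDiffOn ℝ 2 w U)

include hU hw

lemma hasFDerivAt_w {z : ℂ} (hz : z ∈ U) : HasFDerivAt w (fderiv ℝ w z) z := by
  have h : ContDiffAt ℝ 2 w z := hw.contDiffAt (hU.mem_nhds hz)
  exact (h.differentiableAt (by norm_num)).hasFDerivAt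

lemma hasFDerivAt_fderiv {z : ℂ} (hz : z ∈ U) :
    HasFDerivAt (fderiv ℝ w) (fderiv ℝ (fderiv ℝ w) z) z := by
  have h : ContDiffAt ℝ 2 w z := hw.contDiffAt (hU.mem_nhds hz)
  have h1 : ContDiffAt ℝ 1 (fderiv ℝ w) z := h.fderiv_right (by norm_num)
  exact (h1.differentiableAt (by norm_num)).hasFDerivAt

lemma sndSymm {z : ℂ} (hz : z ∈ U) (u v : ℂ) :
    fderiv ℝ (fderiv ℝ w) z u v = fderiv ℝ (fderiv ℝ w) z v u := by
  have h : ContDiffAt ℝ 2 w z := hw.contDiffAt (hU.mem_nhds hz)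
  exact h.isSymmSndFDerivAt (by norm_num) u v

lemma lap_eq {z : ℂ} (hz : z ∈ U) :
    lap w z = fderiv ℝ (fderiv ℝ w) z 1 1 + fderiv ℝ (fderiv ℝ w) z I I := by
  have hd : DifferentiableAt ℝ (fderiv ℝ w) z :=
    (hasFDerivAt_fderiv hU hw hz).differentiableAt
  have h1 : ∀ v : ℂ, fderiv ℝ (fun y => fderiv ℝ w y v) z =
      (fderiv ℝ (fderiv ℝ w) z).flip v := by
    intro v
    have := fderiv_clm_apply (c := fderiv ℝ w) (u := fun _ => v) hd (differentiableAt_const v)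
    simpa using this
  rw [lap, h1 1, h1 I]
  rfl

lemma rotation {z : ℂ} (hz : z ∈ U) (θ : ℝ) :
    fderiv ℝ (fderiv ℝ w) z (e θ) (e θ)
      + fderiv ℝ (fderiv ℝ w) z (I * e θ) (I * e θ)
    = fderiv ℝ (fderiv ℝ w) z 1 1 + fderiv ℝ (fderiv ℝ w) z I I := by
  set F := fderiv ℝ (fderiv ℝ w) z with hF
  have h1 : e θ = Real.cos θ • (1 : ℂ) + Real.sin θ • I := by
    simp [e, Complex.real_smul]
  have h2 : I * e θ = (-Real.sin θ) • (1 : ℂ) + Real.cos θ • I := by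
    simp only [e, Complex.real_smul, smul_eq_mul]
    push_cast
    ring_nf
    rw [Complex.I_sq]
    ring
  have hs := sndSymm hU hw hz 1 I
  rw [h2, h1]
  simp only [map_add, _root_.map_smul, ContinuousLinearMap.add_apply,
    ContinuousLinearMap.smul_apply, smul_eq_mul]
  have pyth := Real.sin_sq_add_cos_sq θ
  linear_combination ((F 1) 1 + (F I) I) * pyth

lemma contOn_fderiv : ContinuousOn (fderiv ℝ w) U :=
  hw.continuousOn_fderiv_of_isOpen hU (by norm_num)

lemma contOn_fderiv2 : ContinuousOn (fderiv ℝ (fderiv ℝ w)) U := by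
  have h1 : ContDiffOn ℝ 1 (fderiv ℝ w) U := hw.fderiv_of_isOpen hU (by norm_num)
  exact h1.continuousOn_fderiv_of_isOpen hU (by norm_num)

end calculus

end MVAux

namespace MVAux
open Complex
section calculus2
variable {w : ℂ → ℝ} {U : Set ℂ} (hU : IsOpen U) (hw : ContDiffOn ℝ 2 w U)
include hU hw

lemma hasDerivAt_w_rho {ρ θ : ℝ} (hz : c ρ θ ∈ U) :
    HasDerivAt (fun ρ => w (c ρ θ)) (fderiv ℝ w (c ρ θ) (e θ)) ρ :=
  (hasFDerivAt_w hU hw hz).comp_hasDerivAt ρ (hasDerivAt_c_rho ρ θ)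

lemma hasDerivAt_g1_rho {ρ θ : ℝ} (hz : c ρ θ ∈ U) :
    HasDerivAt (fun ρ => fderiv ℝ w (c ρ θ) (e θ))
      (fderiv ℝ (fderiv ℝ w) (c ρ θ) (e θ) (e θ)) ρ := by
  have h1 : HasDerivAt (fun ρ : ℝ => fderiv ℝ w (c ρ θ))
      (fderiv ℝ (fderiv ℝ w) (c ρ θ) (e θ)) ρ :=
    (hasFDerivAt_fderiv hU hw hz).comp_hasDerivAt ρ (hasDerivAt_c_rho ρ θ)
  have h2 : HasDerivAt (fun _ : ℝ => e θ) 0 ρ := hasDerivAt_const _ _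
  simpa using h1.clm_apply h2

lemma hasDerivAt_h {ρ θ : ℝ} (hz : c ρ θ ∈ U) :
    HasDerivAt (fun θ => fderiv ℝ w (c ρ θ) (I * e θ))
      (ρ * fderiv ℝ (fderiv ℝ w) (c ρ θ) (I * e θ) (I * e θ)
        - fderiv ℝ w (c ρ θ) (e θ)) θ := by
  have hu : HasDerivAt (fun θ : ℝ => fderiv ℝ w (c ρ θ))
      (fderiv ℝ (fderiv ℝ w) (c ρ θ) ((ρ : ℂ) * (I * e θ))) θ :=
    (hasFDerivAt_fderiv hU hw hz).comp_hasDerivAt θ (hasDerivAt_c ρ θ)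
  have hv : HasDerivAt (fun θ : ℝ => I * e θ) (I * (I * e θ)) θ :=
    (hasDerivAt_e θ).const_mul I
  have h := hu.clm_apply hv
  refine h.congr_deriv ?_
  have hI : I * (I * e θ) = -e θ := by
    rw [← mul_assoc, Complex.I_mul_I]; ring
  have hsm : (ρ : ℂ) * (I * e θ) = ρ • (I * e θ) := Complex.real_smul.symm
  rw [hI, hsm, _root_.map_smul, map_neg]
  simp only [ContinuousLinearMap.smul_apply, smul_eq_mul]
  ring

end calculus2
end MVAux

namespace MVAux
open Complex intervalIntegral

noncomputable def phi (w : ℂ → ℝ) (ρ : ℝ) : ℝ := ∫ θ in (-π)..π, w (c ρ θ)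

noncomputable def G1 (w : ℂ → ℝ) (ρ : ℝ) : ℝ :=
  ∫ θ in (-π)..π, fderiv ℝ w (c ρ θ) (e θ)

noncomputable def G2 (w : ℂ → ℝ) (ρ : ℝ) : ℝ :=
  ∫ θ in (-π)..π, fderiv ℝ (fderiv ℝ w) (c ρ θ) (e θ) (e θ)

noncomputable def Lint (w : ℂ → ℝ) (ρ : ℝ) : ℝ :=
  ∫ θ in (-π)..π, (fderiv ℝ (fderiv ℝ w) (c ρ θ) 1 1
    + fderiv ℝ (fderiv ℝ w) (c ρ θ) I I)

lemma c_mem_closedBall {r' : ℝ} {ρ : ℝ} (θ : ℝ) (h : |ρ| ≤ r') :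
    c ρ θ ∈ Metric.closedBall (0 : ℂ) r' := by
  rw [Metric.mem_closedBall, Complex.dist_eq, sub_zero, abs_c]
  exact h

lemma continuous_c_theta (ρ : ℝ) : Continuous (fun θ => c ρ θ) :=
  continuous_const.mul continuous_e

section param
variable {w : ℂ → ℝ} {U : Set ℂ} {r r' : ℝ} (hU : IsOpen U) (hw : ContDiffOn ℝ 2 w U)
  (hr : 0 < r) (hrr : r < r') (hsub' : Metric.closedBall (0 : ℂ) r' ⊆ U)
include hU hw hr hrr hsub'

lemma cmemU {ρ : ℝ} (θ : ℝ) (h : |ρ| ≤ r') : c ρ θ ∈ U :=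
  hsub' (c_mem_closedBall θ h)

lemma cont_w_theta {ρ : ℝ} (h : |ρ| ≤ r') : Continuous (fun θ => w (c ρ θ)) :=
  hw.continuousOn.comp_continuous (continuous_c_theta ρ) (fun θ => cmemU hU hw hr hrr hsub' θ h)

lemma cont_g1_theta {ρ : ℝ} (h : |ρ| ≤ r') :
    Continuous (fun θ => fderiv ℝ w (c ρ θ) (e θ)) :=
  (((contOn_fderiv hU hw).comp_continuous (continuous_c_theta ρ)
    (fun θ => cmemU hU hw hr hrr hsub' θ h))).clm_apply continuous_e

lemma cont_g2_theta {ρ : ℝ} (h : |ρ| ≤ r') :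
    Continuous (fun θ => fderiv ℝ (fderiv ℝ w) (c ρ θ) (e θ) (e θ)) :=
  ((((contOn_fderiv2 hU hw).comp_continuous (continuous_c_theta ρ)
    (fun θ => cmemU hU hw hr hrr hsub' θ h))).clm_apply continuous_e).clm_apply continuous_e

lemma cont_L_theta {ρ : ℝ} (h : |ρ| ≤ r') :
    Continuous (fun θ => fderiv ℝ (fderiv ℝ w) (c ρ θ) 1 1
      + fderiv ℝ (fderiv ℝ w) (c ρ θ) I I) := by
  have hbase := (contOn_fderiv2 hU hw).comp_continuous (continuous_c_theta ρ)
    (fun θ => cmemU hU hw hr hrr hsub' θ h)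
  exact ((hbase.clm_apply continuous_const).clm_apply continuous_const).add
    ((hbase.clm_apply continuous_const).clm_apply continuous_const)

lemma ball_abs_le {ρ₀ x : ℝ} (hρ₀ : ρ₀ ∈ Set.Icc 0 r) (hx : x ∈ Metric.ball ρ₀ (r' - r)) :
    |x| ≤ r' := by
  rw [Metric.mem_ball, Real.dist_eq] at hx
  obtain ⟨h1, h2⟩ := hρ₀
  have h3 : |x| - |ρ₀| ≤ |x - ρ₀| := abs_sub_abs_le_abs_sub x ρ₀
  have h4 : |ρ₀| = ρ₀ := abs_of_nonneg h1
  linarith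

set_option maxHeartbeats 1000000 in
lemma hasDerivAt_phi {ρ₀ : ℝ} (hρ₀ : ρ₀ ∈ Set.Icc 0 r) :
    HasDerivAt (phi w) (G1 w ρ₀) ρ₀ := by
  obtain ⟨C1, hC1⟩ := (isCompact_closedBall (0:ℂ) r').exists_bound_of_continuousOn
    ((contOn_fderiv hU hw).mono hsub')
  have hεpos : 0 < r' - r := by linarith
  have habs : ∀ x ∈ Metric.ball ρ₀ (r' - r), |x| ≤ r' :=
    fun x hx => ball_abs_le hU hw hr hrr hsub' hρ₀ hx
  have hρ₀abs : |ρ₀| ≤ r' := by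
    rw [abs_le]; exact ⟨by linarith [hρ₀.1], by linarith [hρ₀.2]⟩
  have h1 : ∀ᶠ x in nhds ρ₀, AEStronglyMeasurable (fun θ => w (c x θ))
      (volume.restrict (Set.uIoc (-π) π)) := by
    filter_upwards [Metric.ball_mem_nhds ρ₀ hεpos] with x hx
    exact (cont_w_theta hU hw hr hrr hsub' (habs x hx)).aestronglyMeasurable
  have h2 : IntervalIntegrable (fun θ => w (c ρ₀ θ)) volume (-π) π :=
    (cont_w_theta hU hw hr hrr hsub' hρ₀abs).intervalIntegrable _ _
  have h3 : AEStronglyMeasurable (fun θ => fderiv ℝ w (c ρ₀ θ) (e θ))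
      (volume.restrict (Set.uIoc (-π) π)) :=
    (cont_g1_theta hU hw hr hrr hsub' hρ₀abs).aestronglyMeasurable
  have h4 : ∀ᵐ θ ∂volume, θ ∈ Set.uIoc (-π) π → ∀ x ∈ Metric.ball ρ₀ (r' - r),
      ‖fderiv ℝ w (c x θ) (e θ)‖ ≤ C1 := by
    filter_upwards with θ _ x hx
    calc ‖fderiv ℝ w (c x θ) (e θ)‖ ≤ ‖fderiv ℝ w (c x θ)‖ * ‖e θ‖ :=
          ContinuousLinearMap.le_opNorm _ _
      _ ≤ C1 := by
          rw [norm_e, mul_one]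
          exact hC1 _ (c_mem_closedBall θ (habs x hx))
  have h5 : IntervalIntegrable (fun _ : ℝ => C1) volume (-π) π := intervalIntegrable_const
  have h6 : ∀ᵐ θ ∂volume, θ ∈ Set.uIoc (-π) π → ∀ x ∈ Metric.ball ρ₀ (r' - r),
      HasDerivAt (fun ρ => w (c ρ θ)) (fderiv ℝ w (c x θ) (e θ)) x := by
    filter_upwards with θ _ x hx
    exact hasDerivAt_w_rho hU hw (cmemU hU hw hr hrr hsub' θ (habs x hx))
  exact (intervalIntegral.hasDerivAt_integral_of_dominated_loc_of_deriv_le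
    (Metric.ball_mem_nhds ρ₀ hεpos) h1 h2 h3 h4 h5 h6).2

set_option maxHeartbeats 1000000 in
lemma hasDerivAt_G1 {ρ₀ : ℝ} (hρ₀ : ρ₀ ∈ Set.Icc 0 r) :
    HasDerivAt (G1 w) (G2 w ρ₀) ρ₀ := by
  obtain ⟨C2, hC2⟩ := (isCompact_closedBall (0:ℂ) r').exists_bound_of_continuousOn
    (E := ℂ →L[ℝ] ℂ →L[ℝ] ℝ) ((contOn_fderiv2 hU hw).mono hsub')
  have hεpos : 0 < r' - r := by linarith
  have habs : ∀ x ∈ Metric.ball ρ₀ (r' - r), |x| ≤ r' :=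
    fun x hx => ball_abs_le hU hw hr hrr hsub' hρ₀ hx
  have hρ₀abs : |ρ₀| ≤ r' := by
    rw [abs_le]; exact ⟨by linarith [hρ₀.1], by linarith [hρ₀.2]⟩
  have h1 : ∀ᶠ x in nhds ρ₀, AEStronglyMeasurable (fun θ => fderiv ℝ w (c x θ) (e θ))
      (volume.restrict (Set.uIoc (-π) π)) := by
    filter_upwards [Metric.ball_mem_nhds ρ₀ hεpos] with x hx
    exact (cont_g1_theta hU hw hr hrr hsub' (habs x hx)).aestronglyMeasurable
  have h2 : IntervalIntegrable (fun θ => fderiv ℝ w (c ρ₀ θ) (e θ)) volume (-π) π :=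
    (cont_g1_theta hU hw hr hrr hsub' hρ₀abs).intervalIntegrable _ _
  have h3 : AEStronglyMeasurable (fun θ => fderiv ℝ (fderiv ℝ w) (c ρ₀ θ) (e θ) (e θ))
      (volume.restrict (Set.uIoc (-π) π)) :=
    (cont_g2_theta hU hw hr hrr hsub' hρ₀abs).aestronglyMeasurable
  have h4 : ∀ᵐ θ ∂volume, θ ∈ Set.uIoc (-π) π → ∀ x ∈ Metric.ball ρ₀ (r' - r),
      ‖fderiv ℝ (fderiv ℝ w) (c x θ) (e θ) (e θ)‖ ≤ C2 := by
    filter_upwards with θ _ x hx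
    calc ‖fderiv ℝ (fderiv ℝ w) (c x θ) (e θ) (e θ)‖
        ≤ ‖fderiv ℝ (fderiv ℝ w) (c x θ) (e θ)‖ * ‖e θ‖ :=
          ContinuousLinearMap.le_opNorm _ _
      _ ≤ ‖fderiv ℝ (fderiv ℝ w) (c x θ)‖ * ‖e θ‖ * ‖e θ‖ := by
          gcongr
          exact ContinuousLinearMap.le_opNorm _ _
      _ ≤ C2 := by
          rw [norm_e, mul_one, mul_one]
          exact hC2 _ (c_mem_closedBall θ (habs x hx))
  have h5 : IntervalIntegrable (fun _ : ℝ => C2) volume (-π) π := intervalIntegrable_const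
  have h6 : ∀ᵐ θ ∂volume, θ ∈ Set.uIoc (-π) π → ∀ x ∈ Metric.ball ρ₀ (r' - r),
      HasDerivAt (fun ρ => fderiv ℝ w (c ρ θ) (e θ))
        (fderiv ℝ (fderiv ℝ w) (c x θ) (e θ) (e θ)) x := by
    filter_upwards with θ _ x hx
    exact hasDerivAt_g1_rho hU hw (cmemU hU hw hr hrr hsub' θ (habs x hx))
  exact (intervalIntegral.hasDerivAt_integral_of_dominated_loc_of_deriv_le
    (Metric.ball_mem_nhds ρ₀ hεpos) h1 h2 h3 h4 h5 h6).2

end param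
end MVAux

namespace MVAux
open Complex intervalIntegral

section key
variable {w : ℂ → ℝ} {U : Set ℂ} {r r' b : ℝ} (hU : IsOpen U) (hw : ContDiffOn ℝ 2 w U)
  (hr : 0 < r) (hrr : r < r') (hsub' : Metric.closedBall (0 : ℂ) r' ⊆ U)
include hU hw hr hrr hsub'

lemma key_identity {ρ : ℝ} (hρ : ρ ∈ Set.Icc 0 r) :
    G1 w ρ + ρ * G2 w ρ = ρ * Lint w ρ := by
  have hρabs : |ρ| ≤ r' := by
    rw [abs_le]; exact ⟨by linarith [hρ.1], by linarith [hρ.2]⟩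
  have hmem : ∀ θ, c ρ θ ∈ U := fun θ => cmemU hU hw hr hrr hsub' θ hρabs
  -- continuity of pieces
  have hbase : Continuous (fun θ => fderiv ℝ (fderiv ℝ w) (c ρ θ)) :=
    (contOn_fderiv2 hU hw).comp_continuous (continuous_c_theta ρ) hmem
  have hcont_g1 : Continuous (fun θ => fderiv ℝ w (c ρ θ) (e θ)) :=
    cont_g1_theta hU hw hr hrr hsub' hρabs
  have hcont_g2 : Continuous (fun θ => fderiv ℝ (fderiv ℝ w) (c ρ θ) (e θ) (e θ)) :=
    cont_g2_theta hU hw hr hrr hsub' hρabs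
  have hcont_L : Continuous (fun θ => fderiv ℝ (fderiv ℝ w) (c ρ θ) 1 1
      + fderiv ℝ (fderiv ℝ w) (c ρ θ) I I) :=
    cont_L_theta hU hw hr hrr hsub' hρabs
  have hcont_Ie : Continuous (fun θ => fderiv ℝ (fderiv ℝ w) (c ρ θ) (I * e θ) (I * e θ)) :=
    (hbase.clm_apply (continuous_const.mul continuous_e)).clm_apply
      (continuous_const.mul continuous_e)
  -- FTC for h
  have hftc : (∫ θ in (-π)..π, (ρ * fderiv ℝ (fderiv ℝ w) (c ρ θ) (I * e θ) (I * e θ)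
      - fderiv ℝ w (c ρ θ) (e θ)))
      = fderiv ℝ w (c ρ π) (I * e π) - fderiv ℝ w (c ρ (-π)) (I * e (-π)) := by
    exact intervalIntegral.integral_eq_sub_of_hasDerivAt
      (f := fun θ => fderiv ℝ w (c ρ θ) (I * e θ))
      (fun θ _ => hasDerivAt_h hU hw (hmem θ))
      (((continuous_const.mul hcont_Ie).sub hcont_g1).intervalIntegrable _ _)
  have hper : fderiv ℝ w (c ρ π) (I * e π) - fderiv ℝ w (c ρ (-π)) (I * e (-π)) = 0 := by
    rw [c, c, e_pi, e_neg_pi, sub_self]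
  -- integrabilities
  have i1 : IntervalIntegrable (fun θ => fderiv ℝ w (c ρ θ) (e θ)) volume (-π) π :=
    hcont_g1.intervalIntegrable _ _
  have i2 : IntervalIntegrable
      (fun θ => ρ * fderiv ℝ (fderiv ℝ w) (c ρ θ) (e θ) (e θ)) volume (-π) π :=
    (continuous_const.mul hcont_g2).intervalIntegrable _ _
  have i3 : IntervalIntegrable (fun θ => ρ * (fderiv ℝ (fderiv ℝ w) (c ρ θ) 1 1
      + fderiv ℝ (fderiv ℝ w) (c ρ θ) I I)) volume (-π) π :=
    (continuous_const.mul hcont_L).intervalIntegrable _ _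
  have e1 : G1 w ρ + ρ * G2 w ρ - ρ * Lint w ρ
      = ∫ θ in (-π)..π, (fderiv ℝ w (c ρ θ) (e θ)
          + ρ * fderiv ℝ (fderiv ℝ w) (c ρ θ) (e θ) (e θ)
          - ρ * (fderiv ℝ (fderiv ℝ w) (c ρ θ) 1 1
            + fderiv ℝ (fderiv ℝ w) (c ρ θ) I I)) := by
    rw [G1, G2, Lint, ← intervalIntegral.integral_const_mul,
      ← intervalIntegral.integral_const_mul,
      ← intervalIntegral.integral_add i1 i2, ← intervalIntegral.integral_sub (i1.add i2) i3]
  have e2 : ∀ θ : ℝ, (fderiv ℝ w (c ρ θ) (e θ)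
          + ρ * fderiv ℝ (fderiv ℝ w) (c ρ θ) (e θ) (e θ)
          - ρ * (fderiv ℝ (fderiv ℝ w) (c ρ θ) 1 1
            + fderiv ℝ (fderiv ℝ w) (c ρ θ) I I))
      = -(ρ * fderiv ℝ (fderiv ℝ w) (c ρ θ) (I * e θ) (I * e θ)
          - fderiv ℝ w (c ρ θ) (e θ)) := by
    intro θ
    have := rotation hU hw (hmem θ) θ
    linear_combination ρ * this
  have : G1 w ρ + ρ * G2 w ρ - ρ * Lint w ρ = 0 := by
    rw [e1]
    simp_rw [e2]
    rw [intervalIntegral.integral_neg, hftc, hper, neg_zero]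
  linarith

lemma Lint_ge (hb : (0:ℝ) < b) (hlap : ∀ z ∈ Metric.ball (0 : ℂ) r, -b ≤ lap w z)
    {ρ : ℝ} (hρ : ρ ∈ Set.Ico 0 r) : -(2 * π * b) ≤ Lint w ρ := by
  have hρabs : |ρ| ≤ r' := by
    rw [abs_le]; exact ⟨by linarith [hρ.1], by linarith [hρ.2.le]⟩
  have hmemU : ∀ θ, c ρ θ ∈ U := fun θ => cmemU hU hw hr hrr hsub' θ hρabs
  have hmemB : ∀ θ : ℝ, c ρ θ ∈ Metric.ball (0 : ℂ) r := by
    intro θ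
    rw [Metric.mem_ball, Complex.dist_eq, sub_zero, abs_c, _root_.abs_of_nonneg hρ.1]
    exact hρ.2
  have hcont_L : Continuous (fun θ => fderiv ℝ (fderiv ℝ w) (c ρ θ) 1 1
      + fderiv ℝ (fderiv ℝ w) (c ρ θ) I I) :=
    cont_L_theta hU hw hr hrr hsub' hρabs
  have hmono : (∫ θ in (-π)..π, (-b : ℝ))
      ≤ ∫ θ in (-π)..π, (fderiv ℝ (fderiv ℝ w) (c ρ θ) 1 1
        + fderiv ℝ (fderiv ℝ w) (c ρ θ) I I) := by
    apply intervalIntegral.integral_mono_on (by linarith [Real.pi_pos])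
      intervalIntegrable_const (hcont_L.intervalIntegrable _ _)
    intro θ _
    have := hlap _ (hmemB θ)
    rwa [lap_eq hU hw (hmemU θ)] at this
  have hconst : (∫ θ in (-π)..π, (-b : ℝ)) = -(2 * π * b) := by
    rw [intervalIntegral.integral_const, smul_eq_mul]
    ring
  rw [Lint, ← hconst]
  exact hmono

end key
end MVAux

namespace MVAux
open Complex intervalIntegral

section mono
variable {w : ℂ → ℝ} {U : Set ℂ} {r r' b : ℝ} (hU : IsOpen U) (hw : ContDiffOn ℝ 2 w U)
  (hr : 0 < r) (hrr : r < r') (hsub' : Metric.closedBall (0 : ℂ) r' ⊆ U)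
  (hb : (0:ℝ) < b) (hlap : ∀ z ∈ Metric.ball (0 : ℂ) r, -b ≤ lap w z)
include hU hw hr hrr hsub' hb hlap

lemma psi_lower {ρ : ℝ} (hρ : ρ ∈ Set.Ico 0 r) :
    -(π * b * ρ ^ 2) ≤ ρ * G1 w ρ := by
  set Ψ : ℝ → ℝ := fun x => x * G1 w x + π * b * x ^ 2 with hΨ
  have hd : ∀ x ∈ Set.Icc 0 r, HasDerivAt Ψ (G1 w x + x * G2 w x + π * b * (2 * x)) x := by
    intro x hx
    have h1 : HasDerivAt (fun x : ℝ => x * G1 w x) (1 * G1 w x + x * G2 w x) x :=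
      (hasDerivAt_id x).mul (hasDerivAt_G1 hU hw hr hrr hsub' hx)
    have h2 : HasDerivAt (fun x : ℝ => π * b * x ^ 2) (π * b * (2 * x)) x := by
      simpa using ((hasDerivAt_pow 2 x).const_mul (π * b))
    exact (h1.add h2).congr_deriv (by ring)
  have hmono : MonotoneOn Ψ (Set.Icc 0 ρ) := by
    have hsubI : Set.Icc (0:ℝ) ρ ⊆ Set.Icc 0 r :=
      Set.Icc_subset_Icc le_rfl hρ.2.le
    apply monotoneOn_of_deriv_nonneg (convex_Icc 0 ρ)
    · intro x hx
      exact (hd x (hsubI hx)).continuousAt.continuousWithinAt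
    · intro x hx
      rw [interior_Icc] at hx
      exact (hd x (hsubI (Set.Ioo_subset_Icc_self hx))).differentiableAt.differentiableWithinAt
    · intro x hx
      rw [interior_Icc] at hx
      have hxr : x ∈ Set.Ico 0 r := ⟨hx.1.le, lt_of_lt_of_le hx.2 hρ.2.le⟩
      have hderiv : deriv Ψ x = G1 w x + x * G2 w x + π * b * (2 * x) :=
        (hd x (Set.Ico_subset_Icc_self hxr)).deriv
      rw [hderiv, key_identity hU hw hr hrr hsub' (Set.Ico_subset_Icc_self hxr)]
      have hL := Lint_ge hU hw hr hrr hsub' hb hlap hxr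
      nlinarith [hx.1.le, hL, Real.pi_pos]
  have h0 : Ψ 0 ≤ Ψ ρ :=
    hmono (Set.left_mem_Icc.2 hρ.1) (Set.right_mem_Icc.2 hρ.1) hρ.1
  simp only [hΨ] at h0
  nlinarith [h0]

lemma phi_lower {ρ : ℝ} (hρ : ρ ∈ Set.Ico 0 r) :
    phi w 0 - π * b * ρ ^ 2 / 2 ≤ phi w ρ := by
  set Φ : ℝ → ℝ := fun x => phi w x + π * b * x ^ 2 / 2 with hΦ
  have hd : ∀ x ∈ Set.Icc 0 r, HasDerivAt Φ (G1 w x + π * b * x) x := by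
    intro x hx
    have h1 : HasDerivAt (phi w) (G1 w x) x := hasDerivAt_phi hU hw hr hrr hsub' hx
    have h2 : HasDerivAt (fun x : ℝ => π * b * x ^ 2 / 2) (π * b * x) x := by
      have := ((hasDerivAt_pow 2 x).const_mul (π * b)).div_const 2
      refine this.congr_deriv ?_
      ring
    exact h1.add h2
  have hmono : MonotoneOn Φ (Set.Icc 0 ρ) := by
    have hsubI : Set.Icc (0:ℝ) ρ ⊆ Set.Icc 0 r :=
      Set.Icc_subset_Icc le_rfl hρ.2.le
    apply monotoneOn_of_deriv_nonneg (convex_Icc 0 ρ)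
    · intro x hx
      exact (hd x (hsubI hx)).continuousAt.continuousWithinAt
    · intro x hx
      rw [interior_Icc] at hx
      exact (hd x (hsubI (Set.Ioo_subset_Icc_self hx))).differentiableAt.differentiableWithinAt
    · intro x hx
      rw [interior_Icc] at hx
      have hxr : x ∈ Set.Ico 0 r := ⟨hx.1.le, lt_of_lt_of_le hx.2 hρ.2.le⟩
      have hderiv : deriv Φ x = G1 w x + π * b * x :=
        (hd x (Set.Ico_subset_Icc_self hxr)).deriv
      rw [hderiv]
      have hpsi := psi_lower hU hw hr hrr hsub' hb hlap hxr
      have hx0 : 0 < x := hx.1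
      nlinarith [hpsi]
  have h0 : Φ 0 ≤ Φ ρ :=
    hmono (Set.left_mem_Icc.2 hρ.1) (Set.right_mem_Icc.2 hρ.1) hρ.1
  simp only [hΦ] at h0
  nlinarith [h0]

lemma phi_zero : phi w 0 = 2 * π * w 0 := by
  have : ∀ θ : ℝ, c 0 θ = 0 := by intro θ; simp [c]
  rw [phi]
  simp_rw [this]
  rw [intervalIntegral.integral_const, smul_eq_mul]
  ring

end mono
end MVAux

namespace MVAux
open Complex intervalIntegral Set

section polar
variable {w : ℂ → ℝ} {U : Set ℂ} {r r' : ℝ} (hU : IsOpen U) (hw : ContDiffOn ℝ 2 w U)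
  (hr : 0 < r) (hrr : r < r') (hsub' : Metric.closedBall (0 : ℂ) r' ⊆ U)
include hU hw hr hrr hsub'

lemma integrable_xphi : IntegrableOn (fun x => x * phi w x) (Set.Ioo 0 r) := by
  have hphic : ContinuousOn (phi w) (Set.Icc 0 r) := fun x hx =>
    ((hasDerivAt_phi hU hw hr hrr hsub' hx).continuousAt).continuousWithinAt
  exact ((continuousOn_id.mul hphic).integrableOn_compact isCompact_Icc).mono_set
    Set.Ioo_subset_Icc_self

lemma polar_eq :
    (∫ z in Metric.ball (0 : ℂ) r, w z) = ∫ x in Set.Ioo 0 r, x * phi w x := by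
  have hcc : Continuous (fun p : ℝ × ℝ => c p.1 p.2) := by
    unfold c
    exact (Complex.continuous_ofReal.comp continuous_fst).mul (continuous_e.comp continuous_snd)
  have hGcont : ContinuousOn (fun p : ℝ × ℝ => p.1 * w (c p.1 p.2))
      (Set.Icc 0 r ×ˢ Set.Icc (-π) π) := by
    apply continuous_fst.continuousOn.mul
    apply hw.continuousOn.comp hcc.continuousOn
    intro p hp
    apply cmemU hU hw hr hrr hsub'
    rw [abs_le]
    exact ⟨by linarith [hp.1.1], by linarith [hp.1.2]⟩
  have hGint : IntegrableOn (fun p : ℝ × ℝ => p.1 * w (c p.1 p.2))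
      (Set.Ioo 0 r ×ˢ Set.Ioo (-π) π) :=
    (hGcont.integrableOn_compact (isCompact_Icc.prod isCompact_Icc)).mono_set
      (Set.prod_mono Set.Ioo_subset_Icc_self Set.Ioo_subset_Icc_self)
  have h1 : (∫ z in Metric.ball (0 : ℂ) r, w z)
      = ∫ z, (Metric.ball (0 : ℂ) r).indicator w z :=
    (MeasureTheory.integral_indicator measurableSet_ball).symm
  have h2 := Complex.integral_comp_polarCoord_symm ((Metric.ball (0 : ℂ) r).indicator w)
  have hsymmc : ∀ p : ℝ × ℝ, Complex.polarCoord.symm p = c p.1 p.2 := by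
    intro p
    rw [Complex.polarCoord_symm_apply, c, e]
  have hmeasS : MeasurableSet (Set.Ioo (0:ℝ) r ×ˢ Set.Ioo (-π) π) :=
    measurableSet_Ioo.prod measurableSet_Ioo
  have h3 : (∫ p in _root_.polarCoord.target,
        p.1 • (Metric.ball (0 : ℂ) r).indicator w (Complex.polarCoord.symm p))
      = ∫ p in Set.Ioo (0:ℝ) r ×ˢ Set.Ioo (-π) π, p.1 * w (c p.1 p.2) := by
    rw [show _root_.polarCoord.target = Set.Ioi (0:ℝ) ×ˢ Set.Ioo (-π) π from rfl]
    have step1 : (∫ p in Set.Ioi (0:ℝ) ×ˢ Set.Ioo (-π) π,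
          p.1 • (Metric.ball (0 : ℂ) r).indicator w (Complex.polarCoord.symm p))
        = ∫ p in Set.Ioi (0:ℝ) ×ˢ Set.Ioo (-π) π,
            (Set.Ioo (0:ℝ) r ×ˢ Set.Ioo (-π) π).indicator
              (fun p => p.1 * w (c p.1 p.2)) p := by
      apply setIntegral_congr_fun (measurableSet_Ioi.prod measurableSet_Ioo)
      intro p hp
      have hp1 : (0:ℝ) < p.1 := hp.1
      have hmemiff : c p.1 p.2 ∈ Metric.ball (0 : ℂ) r ↔ p.1 < r := by
        rw [Metric.mem_ball, Complex.dist_eq, sub_zero, abs_c, _root_.abs_of_nonneg hp1.le]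
      simp only [hsymmc]
      by_cases hlt : p.1 < r
      · rw [Set.indicator_of_mem (hmemiff.2 hlt),
          Set.indicator_of_mem (show p ∈ Set.Ioo (0:ℝ) r ×ˢ Set.Ioo (-π) π from Set.mem_prod.2 ⟨⟨hp1, hlt⟩, hp.2⟩), smul_eq_mul]
      · rw [Set.indicator_of_notMem (fun hmem => hlt (hmemiff.1 hmem)),
          Set.indicator_of_notMem (fun hmem => hlt hmem.1.2), smul_zero]
    rw [step1, setIntegral_indicator hmeasS]
    congr 1
    rw [Set.prod_inter_prod, Set.inter_self,
      Set.inter_eq_self_of_subset_right Set.Ioo_subset_Ioi_self]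
  have h4 : (∫ p in Set.Ioo (0:ℝ) r ×ˢ Set.Ioo (-π) π, p.1 * w (c p.1 p.2))
      = ∫ x in Set.Ioo (0:ℝ) r, ∫ y in Set.Ioo (-π) π, x * w (c x y) := by
    rw [Measure.volume_eq_prod] at hGint ⊢
    exact setIntegral_prod _ hGint
  have h5 : ∀ x : ℝ, (∫ y in Set.Ioo (-π) π, x * w (c x y)) = x * phi w x := by
    intro x
    rw [MeasureTheory.integral_const_mul]
    congr 1
    rw [phi, intervalIntegral.integral_of_le (by linarith [Real.pi_pos]),
      integral_Ioc_eq_integral_Ioo]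
  rw [h1, ← h2, h3, h4]
  simp_rw [h5]

end polar
end MVAux


open MVAux

/-- Mean value inequality: if `w ≥ 0` is `C²` on an open neighborhood of the closed
disk of radius `r` and `Δw ≥ −b` on the open disk, then
`w(0) ≤ b·r²/8 + (1/(π r²)) ∫_{D²(r)} w`. -/
theorem meanvalue_linear (r b : ℝ) (hr : 0 < r) (hb : 0 < b)
    (w : ℂ → ℝ) (U : Set ℂ) (hU : IsOpen U)
    (hsub : Metric.closedBall (0 : ℂ) r ⊆ U)
    (hw : ContDiffOn ℝ 2 w U)
    (hnn : ∀ z ∈ U, 0 ≤ w z)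
    (hlap : ∀ z ∈ Metric.ball (0 : ℂ) r, -b ≤ lap w z) :
    w 0 ≤ b * r ^ 2 / 8 + (1 / (π * r ^ 2)) * ∫ z in Metric.ball (0 : ℂ) r, w z := by
  classical
  obtain ⟨δ, hδ, hthick⟩ :=
    (isCompact_closedBall (0 : ℂ) r).exists_thickening_subset_open hU hsub
  have hrr : r < r + δ / 2 := by linarith
  have hsub' : Metric.closedBall (0 : ℂ) (r + δ / 2) ⊆ U := by
    refine subset_trans ?_ hthick
    intro x hx
    rw [Metric.mem_closedBall, dist_zero_right] at hx
    rw [Metric.mem_thickening_iff]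
    by_cases hxr : ‖x‖ ≤ r
    · exact ⟨x, by rwa [Metric.mem_closedBall, dist_zero_right], by simpa using hδ⟩
    · push_neg at hxr
      have hx0 : (0:ℝ) < ‖x‖ := lt_trans hr hxr
      refine ⟨(r * ‖x‖⁻¹) • x, ?_, ?_⟩
      · rw [Metric.mem_closedBall, dist_zero_right, norm_smul, Real.norm_eq_abs,
          _root_.abs_of_nonneg (by positivity)]
        rw [mul_assoc, inv_mul_cancel₀ hx0.ne', mul_one]
      · rw [dist_eq_norm, show x - (r * ‖x‖⁻¹) • x = (1 - r * ‖x‖⁻¹) • x by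
          rw [sub_smul, one_smul], norm_smul, Real.norm_eq_abs]
        have h1 : r * ‖x‖⁻¹ < 1 := by
          rw [mul_inv_lt_iff₀ hx0, one_mul]; exact hxr
        rw [_root_.abs_of_nonneg (by linarith)]
        have : (1 - r * ‖x‖⁻¹) * ‖x‖ = ‖x‖ - r := by
          rw [sub_mul, one_mul, mul_assoc, inv_mul_cancel₀ hx0.ne', mul_one]
        rw [this]
        linarith
  -- main chain
  have hpolar := polar_eq hU hw hr hrr hsub'
  have hxphi_int := integrable_xphi hU hw hr hrr hsub'
  have hpoly_int : IntegrableOn (fun x : ℝ => 2 * π * w 0 * x - π * b / 2 * x ^ 3)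
      (Set.Ioo 0 r) := by
    have hcont : Continuous (fun x : ℝ => 2 * π * w 0 * x - π * b / 2 * x ^ 3) := by fun_prop
    exact (hcont.continuousOn.integrableOn_compact isCompact_Icc).mono_set
      Set.Ioo_subset_Icc_self
  have hcompare : (∫ x in Set.Ioo (0:ℝ) r, (2 * π * w 0 * x - π * b / 2 * x ^ 3))
      ≤ ∫ x in Set.Ioo (0:ℝ) r, x * phi w x := by
    apply setIntegral_mono_on hpoly_int hxphi_int measurableSet_Ioo
    intro x hx
    have hx' : x ∈ Set.Ico 0 r := ⟨hx.1.le, hx.2⟩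
    have hlow := phi_lower hU hw hr hrr hsub' hb hlap hx'
    rw [phi_zero hU hw hr hrr hsub' hb hlap] at hlow
    nlinarith [mul_le_mul_of_nonneg_left hlow hx.1.le]
  have hval : (∫ x in Set.Ioo (0:ℝ) r, (2 * π * w 0 * x - π * b / 2 * x ^ 3))
      = π * r ^ 2 * w 0 - π * b * r ^ 4 / 8 := by
    rw [← MeasureTheory.integral_Ioc_eq_integral_Ioo,
      ← intervalIntegral.integral_of_le hr.le]
    have hi1 : IntervalIntegrable (fun x : ℝ => 2 * π * w 0 * x) volume 0 r := by
      apply Continuous.intervalIntegrable; fun_prop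
    have hi2 : IntervalIntegrable (fun x : ℝ => π * b / 2 * x ^ 3) volume 0 r := by
      apply Continuous.intervalIntegrable; fun_prop
    rw [intervalIntegral.integral_sub hi1 hi2, intervalIntegral.integral_const_mul,
      intervalIntegral.integral_const_mul, integral_id, integral_pow]
    norm_num
    ring
  have hfin : π * r ^ 2 * w 0 - π * b * r ^ 4 / 8 ≤ ∫ z in Metric.ball (0 : ℂ) r, w z := by
    rw [hpolar]
    linarith
  have hπ : (0:ℝ) < π * r ^ 2 := by positivity
  have hdiv : w 0 - b * r ^ 2 / 8 ≤ (∫ z in Metric.ball (0 : ℂ) r, w z) / (π * r ^ 2) := by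
    rw [le_div_iff₀ hπ]
    nlinarith [hfin]
  have heq : (1 / (π * r ^ 2)) * (∫ z in Metric.ball (0 : ℂ) r, w z)
      = (∫ z in Metric.ball (0 : ℂ) r, w z) / (π * r ^ 2) := by ring
  rw [heq]
  linarith
end

section
/- Let E be a real inner product space and J : E → E a linear isometry with J ∘ J = −id, and define ω(v,w) := ⟪Jv, w⟫. Then for all v, w ∈ E one has ω(v,w) ≤ √(‖v‖²·‖w‖² − ⟪v,w⟫²); moreover, equality holds whenever w = a·v + b·Jv with a ∈ ℝ and b ≥ 0. -/
open RealInnerProductSpace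

/-- For a compatible complex structure `J` on a real inner product space `E`
(a linear isometry with `J² = −id`) and the symplectic form `ω(v,w) = ⟪Jv, w⟫`,
one has `ω(v,w) ≤ √(‖v‖²‖w‖² − ⟪v,w⟫²)` for all `v, w`, with equality when
`w = a•v + b•Jv` with `b ≥ 0`. -/
theorem symplectic_le_area {E : Type*} [NormedAddCommGroup E] [InnerProductSpace ℝ E]
    (J : E →ₗ[ℝ] E) (hJ2 : ∀ v, J (J v) = -v) (hJiso : ∀ v, ‖J v‖ = ‖v‖) :
    (∀ v w : E, ⟪J v, w⟫ ≤ Real.sqrt (‖v‖ ^ 2 * ‖w‖ ^ 2 - ⟪v, w⟫ ^ 2)) ∧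
    (∀ (v : E) (a b : ℝ), 0 ≤ b →
      ⟪J v, a • v + b • J v⟫ =
        Real.sqrt (‖v‖ ^ 2 * ‖a • v + b • J v‖ ^ 2 - ⟪v, a • v + b • J v⟫ ^ 2)) := by
  -- J preserves inner products
  have hip : ∀ x y : E, ⟪J x, J y⟫ = ⟪x, y⟫ := by
    intro x y
    rw [real_inner_eq_norm_add_mul_self_sub_norm_mul_self_sub_norm_mul_self_div_two,
      real_inner_eq_norm_add_mul_self_sub_norm_mul_self_sub_norm_mul_self_div_two x y,
      ← map_add, hJiso, hJiso, hJiso]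
  -- ⟪J v, v⟫ = 0
  have horth : ∀ v : E, ⟪J v, v⟫ = 0 := by
    intro v
    have h := hip (J v) v
    rw [hJ2, inner_neg_left, real_inner_comm] at h
    linarith
  have hJn : ∀ v : E, ⟪J v, J v⟫ = ⟪v, v⟫ := fun v => hip v v
  constructor
  · intro v w
    set c := ⟪J v, w⟫ with hc
    set d := ⟪v, w⟫ with hd
    have key : c ^ 2 + d ^ 2 ≤ ‖v‖ ^ 2 * ‖w‖ ^ 2 := by
      rcases eq_or_ne v 0 with rfl | hv
      · simp [hc, hd]
      · have hv' : (0:ℝ) < ‖v‖ := norm_pos_iff.mpr hv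
        have hn : (0:ℝ) < ‖v‖ ^ 2 := by positivity
        have h0 : (0:ℝ) ≤ ‖(‖v‖^2) • w - d • v - c • J v‖ ^ 2 := sq_nonneg _
        have hexp : ‖(‖v‖^2) • w - d • v - c • J v‖ ^ 2 =
            (‖v‖^2)^2 * ‖w‖^2 - ‖v‖^2 * (c^2 + d^2) := by
          rw [← real_inner_self_eq_norm_sq]
          simp only [inner_sub_sub_self, inner_smul_left, inner_smul_right, RCLike.star_def,
            starRingEnd_apply, star_trivial]
          have h1 : ⟪v, J v⟫ = 0 := by rw [real_inner_comm]; exact horth v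
          have h2 : ⟪J v, v⟫ = 0 := horth v
          have h3 : ⟪J v, J v⟫ = ‖v‖^2 := by rw [hJn, real_inner_self_eq_norm_sq]
          have h4 : ⟪v, v⟫ = ‖v‖^2 := real_inner_self_eq_norm_sq v
          have h5 : ⟪w, w⟫ = ‖w‖^2 := real_inner_self_eq_norm_sq w
          have h6 : ⟪w, v⟫ = d := (real_inner_comm w v).symm
          have h7 : ⟪w, J v⟫ = c := (real_inner_comm w (J v)).symm
          simp only [inner_sub_left, inner_sub_right, inner_smul_left, inner_smul_right,
            RCLike.star_def, starRingEnd_apply, star_trivial, h1, h2, h3, h4, h5, h6, h7,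
            ← hc, ← hd]
          ring
        rw [hexp] at h0
        nlinarith
    rcases le_or_gt c 0 with hcn | hcp
    · exact hcn.trans (Real.sqrt_nonneg _)
    · rw [show ‖v‖ ^ 2 * ‖w‖ ^ 2 - d ^ 2 = c^2 + (‖v‖ ^ 2 * ‖w‖ ^ 2 - d^2 - c^2) by ring]
      calc c = Real.sqrt (c^2) := by rw [Real.sqrt_sq hcp.le]
        _ ≤ _ := Real.sqrt_le_sqrt (by linarith)
  · intro v a b hb
    have h1 : ⟪v, J v⟫ = 0 := by rw [real_inner_comm]; exact horth v
    have h3 : ⟪J v, J v⟫ = ‖v‖^2 := by rw [hJn, real_inner_self_eq_norm_sq]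
    have h4 : ⟪v, v⟫ = ‖v‖^2 := real_inner_self_eq_norm_sq v
    have hL : ⟪J v, a • v + b • J v⟫ = b * ‖v‖^2 := by
      rw [inner_add_right, real_inner_smul_right, real_inner_smul_right, horth v, h3]; ring
    have hM : ⟪v, a • v + b • J v⟫ = a * ‖v‖^2 := by
      rw [inner_add_right, real_inner_smul_right, real_inner_smul_right, h1, h4]; ring
    have hN : ‖a • v + b • J v‖^2 = (a^2 + b^2) * ‖v‖^2 := by
      rw [← real_inner_self_eq_norm_sq, inner_add_add_self]
      simp only [real_inner_smul_left, real_inner_smul_right, h1, h3, h4, horth v]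
      ring
    rw [hL, hM, hN,
      show ‖v‖ ^ 2 * ((a^2+b^2) * ‖v‖^2) - (a * ‖v‖^2)^2 = (b * ‖v‖^2)^2 by ring,
      Real.sqrt_sq (by positivity)]
end

section
/- Good-circle lemma: let E be a real inner product space, let 0 < a < b, and let u be a C¹ map from an open neighborhood of the closed annulus A(a,b) = {z ∈ ℂ : a ≤ |z| ≤ b} to E. Then there exists ρ ∈ [a,b] such that the square of the length of the circle image, (∫₀^{2π} ‖∂_θ u(ρ·e^{iθ})‖ dθ)², is at most (2π / log(b/a)) · ∫_{A(a,b)} (‖∂_x u(z)‖² + ‖∂_y u(z)‖²) dA(z), where dA is 2-dimensional Lebesgue measure. -/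
open MeasureTheory Real

private lemma sq_intInt_le {T : ℝ} (hT : 0 < T) {h : ℝ → ℝ} (hc : Continuous h) :
    (∫ x in (0:ℝ)..T, h x) ^ 2 ≤ T * ∫ x in (0:ℝ)..T, (h x) ^ 2 := by
  set I := ∫ x in (0:ℝ)..T, h x with hI
  set J := ∫ x in (0:ℝ)..T, (h x) ^ 2 with hJ
  have h1 : (0:ℝ) ≤ ∫ x in (0:ℝ)..T, (T * h x - I) ^ 2 :=
    intervalIntegral.integral_nonneg hT.le (fun x _ => sq_nonneg _)
  have h2 : (∫ x in (0:ℝ)..T, (T * h x - I) ^ 2) = T ^ 2 * J - T * I ^ 2 := by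
    have e : ∀ x : ℝ, (T * h x - I) ^ 2 = T ^ 2 * (h x) ^ 2 - (2 * T * I) * h x + I ^ 2 := by
      intro x; ring
    simp_rw [e]
    rw [intervalIntegral.integral_add (f := fun x => T ^ 2 * h x ^ 2 - 2 * T * I * h x)
          (g := fun _ => I ^ 2) ((((continuous_const.mul (hc.pow 2)).sub
          (continuous_const.mul hc)).intervalIntegrable _ _ :
            IntervalIntegrable (fun x => T ^ 2 * h x ^ 2 - 2 * T * I * h x) volume 0 T))
          (intervalIntegrable_const),
        intervalIntegral.integral_sub (f := fun x => T ^ 2 * h x ^ 2)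
          (g := fun x => 2 * T * I * h x) (((continuous_const.mul (hc.pow 2)).intervalIntegrable _ _ :
            IntervalIntegrable (fun x => T ^ 2 * h x ^ 2) volume 0 T))
          (((continuous_const.mul hc).intervalIntegrable _ _ :
            IntervalIntegrable (fun x => 2 * T * I * h x) volume 0 T)),
        intervalIntegral.integral_const_mul, intervalIntegral.integral_const_mul,
        intervalIntegral.integral_const, ← hI, ← hJ, smul_eq_mul]
    ring
  rw [h2] at h1
  nlinarith [sq_nonneg I]

/-- Good-circle lemma: for a `C¹` map `u` on an open neighborhood of the closed
annulus `A(a,b) = {a ≤ |z| ≤ b}` with values in a real inner product space,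
there exists a radius `ρ ∈ [a,b]` such that the square of the length of the loop
`θ ↦ u(ρ e^{iθ})` is at most `(2π / log(b/a))` times the Dirichlet energy of `u`
on the annulus. -/
theorem good_circle {E : Type*} [NormedAddCommGroup E] [InnerProductSpace ℝ E]
    (a b : ℝ) (ha : 0 < a) (hab : a < b)
    (u : ℂ → E) (U : Set ℂ) (hU : IsOpen U)
    (hsub : {z : ℂ | a ≤ ‖z‖ ∧ ‖z‖ ≤ b} ⊆ U)
    (hu : ContDiffOn ℝ 1 u U) :
    ∃ ρ ∈ Set.Icc a b,
      (∫ θ in (0 : ℝ)..(2 * π),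
          ‖deriv (fun t : ℝ => u ((ρ : ℂ) * Complex.exp (t * Complex.I))) θ‖) ^ 2 ≤
        (2 * π / Real.log (b / a)) *
          ∫ z in {z : ℂ | a ≤ ‖z‖ ∧ ‖z‖ ≤ b},
            (‖fderiv ℝ u z 1‖ ^ 2 + ‖fderiv ℝ u z Complex.I‖ ^ 2) := by
  have hpi : (0:ℝ) < π := pi_pos
  set S : Set ℂ := {z : ℂ | a ≤ ‖z‖ ∧ ‖z‖ ≤ b} with hSdef
  set F : ℂ → ℝ := fun z => ‖fderiv ℝ u z 1‖ ^ 2 + ‖fderiv ℝ u z Complex.I‖ ^ 2 with hFdef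
  -- basic facts
  have hnormc : ∀ ρ θ : ℝ, ‖(ρ : ℂ) * Complex.exp (θ * Complex.I)‖ = |ρ| := by
    intro ρ θ
    rw [norm_mul, Complex.norm_exp_ofReal_mul_I,
      Complex.norm_real, Real.norm_eq_abs, mul_one]
  have hmemS : ∀ ρ ∈ Set.Icc a b, ∀ θ : ℝ, (ρ : ℂ) * Complex.exp (θ * Complex.I) ∈ S := by
    intro ρ hρ θ
    have hρpos : 0 < ρ := lt_of_lt_of_le ha hρ.1
    refine ⟨?_, ?_⟩ <;> rw [hnormc, abs_of_pos hρpos]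
    exacts [hρ.1, hρ.2]
  have hfd : ContinuousOn (fderiv ℝ u) U := hu.continuousOn_fderiv_of_isOpen hU le_rfl
  have hFc : ContinuousOn F U := by
    apply ContinuousOn.add
    · exact ((hfd.clm_apply continuousOn_const).norm.pow 2)
    · exact ((hfd.clm_apply continuousOn_const).norm.pow 2)
  have hcc : Continuous (fun p : ℝ × ℝ => (p.1 : ℂ) * Complex.exp (p.2 * Complex.I)) := by
    fun_prop
  -- derivative of the loop
  have hderiv : ∀ ρ ∈ Set.Icc a b, ∀ θ : ℝ,
      HasDerivAt (fun t : ℝ => u ((ρ : ℂ) * Complex.exp (t * Complex.I)))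
        ((fderiv ℝ u ((ρ : ℂ) * Complex.exp (θ * Complex.I)))
          ((ρ : ℂ) * Complex.exp (θ * Complex.I) * Complex.I)) θ := by
    intro ρ hρ θ
    have hz : HasDerivAt (fun t : ℝ => (ρ : ℂ) * Complex.exp (t * Complex.I))
        ((ρ : ℂ) * Complex.exp ((θ:ℂ) * Complex.I) * Complex.I) θ := by
      have h1 : HasDerivAt (fun z : ℂ => (ρ:ℂ) * Complex.exp (z * Complex.I))
          ((ρ:ℂ) * Complex.exp ((θ:ℂ) * Complex.I) * Complex.I) (θ:ℂ) := by
        have := (((hasDerivAt_id (θ:ℂ)).mul_const Complex.I).cexp).const_mul (ρ:ℂ)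
        simpa [mul_assoc, mul_comm, mul_left_comm] using this
      exact h1.comp_ofReal
    have hdiff : DifferentiableAt ℝ u ((ρ : ℂ) * Complex.exp (θ * Complex.I)) :=
      (hu.contDiffAt (hU.mem_nhds (hsub (hmemS ρ hρ θ)))).differentiableAt one_ne_zero
    exact hdiff.hasFDerivAt.comp_hasDerivAt θ hz
  -- pointwise bound
  have hbound : ∀ ρ ∈ Set.Icc a b, ∀ θ : ℝ,
      ‖(fderiv ℝ u ((ρ : ℂ) * Complex.exp (θ * Complex.I)))
          ((ρ : ℂ) * Complex.exp (θ * Complex.I) * Complex.I)‖ ^ 2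
        ≤ ρ ^ 2 * F ((ρ : ℂ) * Complex.exp (θ * Complex.I)) := by
    intro ρ hρ θ
    set A := fderiv ℝ u ((ρ : ℂ) * Complex.exp (θ * Complex.I)) with hA
    have hw : (ρ : ℂ) * Complex.exp (θ * Complex.I) * Complex.I
        = ρ • ((-(Real.sin θ)) • (1:ℂ) + (Real.cos θ) • Complex.I) := by
      rw [Complex.exp_mul_I]
      push_cast [Complex.real_smul]
      linear_combination (ρ : ℂ) * Complex.sin θ * Complex.I_sq
    rw [hw, _root_.map_smul, norm_smul, map_add, _root_.map_smul, _root_.map_smul]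
    have h1 := norm_add_le ((-Real.sin θ : ℝ) • A 1) ((Real.cos θ : ℝ) • A Complex.I)
    rw [norm_smul, norm_smul] at h1
    simp only [Real.norm_eq_abs, abs_neg] at h1
    have hs := Real.sin_sq_add_cos_sq θ
    have hn0 : (0:ℝ) ≤ ‖(-Real.sin θ : ℝ) • A 1 + (Real.cos θ : ℝ) • A Complex.I‖ :=
      norm_nonneg _
    have e : ‖ρ‖ = |ρ| := rfl
    rw [e, mul_pow, sq_abs]
    have key : ‖(-Real.sin θ : ℝ) • A 1 + (Real.cos θ : ℝ) • A Complex.I‖ ^ 2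
        ≤ ‖A 1‖ ^ 2 + ‖A Complex.I‖ ^ 2 := by
      nlinarith [sq_nonneg (|Real.sin θ| * ‖A Complex.I‖ - |Real.cos θ| * ‖A 1‖),
        sq_abs (Real.sin θ), sq_abs (Real.cos θ), abs_nonneg (Real.sin θ),
        abs_nonneg (Real.cos θ), norm_nonneg (A 1), norm_nonneg (A Complex.I)]
    have hFval : F ((ρ : ℂ) * Complex.exp (θ * Complex.I))
        = ‖A 1‖ ^ 2 + ‖A Complex.I‖ ^ 2 := rfl
    rw [hFval]
    nlinarith [sq_nonneg ρ, key]
  -- the angular energy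
  set Φ : ℝ → ℝ := fun ρ => ∫ θ in (0:ℝ)..(2 * π), F ((ρ : ℂ) * Complex.exp (θ * Complex.I))
    with hΦdef
  have hΦc : ContinuousOn Φ (Set.Icc a b) := by
    rw [continuousOn_iff_continuous_restrict]
    have hunc : Continuous (Function.uncurry
        (fun (ρ : Set.Icc a b) (θ : ℝ) => F ((ρ : ℂ) * Complex.exp (θ * Complex.I)))) := by
      apply hFc.comp_continuous
      · exact hcc.comp ((continuous_subtype_val.comp continuous_fst).prodMk continuous_snd)
      · intro p; exact hsub (hmemS _ p.1.2 _)
    exact intervalIntegral.continuous_parametric_intervalIntegral_of_continuous' hunc 0 (2 * π)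
  have hFnonneg : ∀ z, 0 ≤ F z := fun z => by positivity
  have hΦnonneg : ∀ ρ, 0 ≤ Φ ρ :=
    fun ρ => intervalIntegral.integral_nonneg (by positivity) (fun θ _ => hFnonneg _)
  -- minimum of ρ² Φ ρ
  obtain ⟨ρ₀, hρ₀, hmin⟩ := isCompact_Icc.exists_isMinOn (Set.nonempty_Icc.mpr hab.le)
    (((continuous_id.pow 2).continuousOn).mul hΦc : ContinuousOn (fun ρ : ℝ => ρ ^ 2 * Φ ρ) _)
  set m : ℝ := ρ₀ ^ 2 * Φ ρ₀ with hmdef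
  have hm0 : 0 ≤ m := mul_nonneg (sq_nonneg _) (hΦnonneg _)
  -- energy identity via polar coordinates
  have hE : (∫ z in S, F z) = ∫ ρ in a..b, ρ * Φ ρ := by
    have hSm : MeasurableSet S := by
      have hcl : IsClosed S := by
        have : S = (fun z : ℂ => ‖z‖) ⁻¹' (Set.Icc a b) := by
          ext z; simp [hSdef, Set.mem_Icc]
        rw [this]; exact isClosed_Icc.preimage continuous_norm
      exact hcl.measurableSet
    have hsymm : ∀ p : ℝ × ℝ, Complex.polarCoord.symm p
        = (p.1 : ℂ) * Complex.exp (p.2 * Complex.I) := by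
      intro p
      rw [Complex.polarCoord_symm_apply, Complex.exp_mul_I]
      push_cast [Complex.ofReal_cos, Complex.ofReal_sin]
      ring
    set G : ℝ × ℝ → ℝ := fun p => p.1 * F ((p.1 : ℂ) * Complex.exp (p.2 * Complex.I))
      with hGdef
    have hGc : ContinuousOn G (Set.Icc a b ×ˢ Set.Icc (-π) π) := by
      apply ContinuousOn.mul continuous_fst.continuousOn
      apply hFc.comp hcc.continuousOn
      intro p hp
      exact hsub (hmemS _ hp.1 _)
    have hGint : IntegrableOn G (Set.Icc a b ×ˢ Set.Ioo (-π) π)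
        ((volume : Measure ℝ).prod volume) := by
      rw [← Measure.volume_eq_prod]
      exact (hGc.integrableOn_compact (isCompact_Icc.prod isCompact_Icc)).mono_set
        (Set.prod_mono subset_rfl Set.Ioo_subset_Icc_self)
    calc (∫ z in S, F z) = ∫ z, S.indicator F z := (integral_indicator hSm).symm
      _ = ∫ p in polarCoord.target, p.1 • S.indicator F (Complex.polarCoord.symm p) :=
          (Complex.integral_comp_polarCoord_symm (S.indicator F)).symm
      _ = ∫ p in polarCoord.target,
            (Set.Icc a b ×ˢ (Set.univ : Set ℝ)).indicator G p := by
          refine setIntegral_congr_fun polarCoord.open_target.measurableSet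
            (fun p hp => ?_)
          rw [polarCoord_target] at hp
          have hp1 : 0 < p.1 := hp.1
          have hiff : Complex.polarCoord.symm p ∈ S
              ↔ p ∈ Set.Icc a b ×ˢ (Set.univ : Set ℝ) := by
            rw [hsymm p]
            constructor
            · rintro ⟨h1, h2⟩
              rw [hnormc, abs_of_pos hp1] at h1 h2
              exact ⟨⟨h1, h2⟩, Set.mem_univ _⟩
            · rintro ⟨⟨h1, h2⟩, -⟩
              refine ⟨?_, ?_⟩ <;> rw [hnormc, abs_of_pos hp1]
              exacts [h1, h2]
          by_cases hmem : Complex.polarCoord.symm p ∈ S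
          · rw [Set.indicator_of_mem hmem, Set.indicator_of_mem (hiff.mp hmem)]
            rw [hsymm p, smul_eq_mul]
          · rw [Set.indicator_of_notMem hmem,
              Set.indicator_of_notMem (fun h => hmem (hiff.mpr h)), smul_zero]
      _ = ∫ p in polarCoord.target ∩ (Set.Icc a b ×ˢ (Set.univ : Set ℝ)), G p :=
          setIntegral_indicator (measurableSet_Icc.prod MeasurableSet.univ)
      _ = ∫ p in Set.Icc a b ×ˢ Set.Ioo (-π) π, G p := by
          congr 1
          rw [polarCoord_target, Set.prod_inter_prod, Set.inter_univ,
            Set.inter_eq_self_of_subset_right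
              (show Set.Icc a b ⊆ Set.Ioi (0:ℝ) from fun x hx => lt_of_lt_of_le ha hx.1)]
      _ = ∫ ρ in Set.Icc a b, ∫ θ in Set.Ioo (-π) π, G (ρ, θ) := by
          rw [Measure.volume_eq_prod]
          exact setIntegral_prod G hGint
      _ = ∫ ρ in Set.Icc a b, ρ * Φ ρ := by
          refine setIntegral_congr_fun measurableSet_Icc (fun ρ hρ => ?_)
          have hper : Function.Periodic
              (fun θ : ℝ => F ((ρ : ℂ) * Complex.exp (θ * Complex.I))) (2 * π) := by
            intro θ
            have hθ : ((θ + 2 * π : ℝ) : ℂ) * Complex.I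
                = (θ : ℂ) * Complex.I + 2 * π * Complex.I := by push_cast; ring
            simp only [hθ, Complex.exp_add, Complex.exp_two_pi_mul_I, mul_one]
          calc (∫ θ in Set.Ioo (-π) π, G (ρ, θ))
              = ∫ θ in Set.Ioc (-π) π, G (ρ, θ) := integral_Ioc_eq_integral_Ioo.symm
            _ = ∫ θ in (-π)..π, G (ρ, θ) :=
                (intervalIntegral.integral_of_le (by linarith)).symm
            _ = ρ * ∫ θ in (-π)..π, F ((ρ : ℂ) * Complex.exp (θ * Complex.I)) := by
                simp only [hGdef]
                rw [intervalIntegral.integral_const_mul]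
            _ = ρ * Φ ρ := by
                congr 1
                calc (∫ θ in (-π)..π, F ((ρ : ℂ) * Complex.exp (θ * Complex.I)))
                    = ∫ θ in (-π)..(-π + 2 * π),
                        F ((ρ : ℂ) * Complex.exp (θ * Complex.I)) := by
                      rw [show -π + 2 * π = π by ring]
                  _ = ∫ θ in (0:ℝ)..(0 + 2 * π),
                        F ((ρ : ℂ) * Complex.exp (θ * Complex.I)) :=
                      hper.intervalIntegral_add_eq (-π) 0
                  _ = Φ ρ := by rw [hΦdef]; norm_num
      _ = ∫ ρ in a..b, ρ * Φ ρ := by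
          rw [intervalIntegral.integral_of_le hab.le, ← integral_Icc_eq_integral_Ioc]
  -- lower bound for the energy
  have hlog : 0 < Real.log (b / a) :=
    Real.log_pos ((one_lt_div ha).mpr hab)
  have hmE : m * Real.log (b / a) ≤ ∫ z in S, F z := by
    rw [hE]
    have h1 : (∫ ρ in a..b, m * (1 / ρ)) = m * Real.log (b / a) := by
      rw [intervalIntegral.integral_const_mul, integral_one_div_of_pos ha (ha.trans hab)]
    have h2 : (∫ ρ in a..b, m * (1 / ρ)) ≤ ∫ ρ in a..b, ρ * Φ ρ := by
      apply intervalIntegral.integral_mono_on hab.le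
      · apply ContinuousOn.intervalIntegrable
        rw [Set.uIcc_of_le hab.le]
        exact continuousOn_const.mul (continuousOn_const.div continuousOn_id
          (fun x hx => ne_of_gt (lt_of_lt_of_le ha hx.1)))
      · apply ContinuousOn.intervalIntegrable
        rw [Set.uIcc_of_le hab.le]
        exact continuousOn_id.mul hΦc
      · intro ρ hρ
        have hρpos : 0 < ρ := lt_of_lt_of_le ha hρ.1
        have hminρ : m ≤ ρ ^ 2 * Φ ρ := hmin hρ
        rw [mul_one_div, div_le_iff₀ hρpos]
        nlinarith [hΦnonneg ρ]
    linarith [h1 ▸ h2]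
  -- conclusion
  refine ⟨ρ₀, hρ₀, ?_⟩
  have hLrw : (∫ θ in (0:ℝ)..(2 * π),
      ‖deriv (fun t : ℝ => u ((ρ₀ : ℂ) * Complex.exp (t * Complex.I))) θ‖)
      = ∫ θ in (0:ℝ)..(2 * π),
        ‖(fderiv ℝ u ((ρ₀ : ℂ) * Complex.exp (θ * Complex.I)))
          ((ρ₀ : ℂ) * Complex.exp (θ * Complex.I) * Complex.I)‖ := by
    refine intervalIntegral.integral_congr (fun θ _ => ?_)
    rw [(hderiv ρ₀ hρ₀ θ).deriv]
  rw [hLrw]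
  have hgc : Continuous (fun θ : ℝ => (ρ₀ : ℂ) * Complex.exp (θ * Complex.I)) :=
    hcc.comp (continuous_const.prodMk continuous_id)
  have hmemU : ∀ θ : ℝ, (ρ₀ : ℂ) * Complex.exp (θ * Complex.I) ∈ U :=
    fun θ => hsub (hmemS ρ₀ hρ₀ θ)
  have hAc : Continuous (fun θ : ℝ => fderiv ℝ u ((ρ₀ : ℂ) * Complex.exp (θ * Complex.I))) :=
    hfd.comp_continuous hgc hmemU
  have hHc : Continuous (fun θ : ℝ =>
      ‖(fderiv ℝ u ((ρ₀ : ℂ) * Complex.exp (θ * Complex.I)))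
        ((ρ₀ : ℂ) * Complex.exp (θ * Complex.I) * Complex.I)‖) :=
    (hAc.clm_apply (hgc.mul continuous_const)).norm
  have hFthc : Continuous (fun θ : ℝ => F ((ρ₀ : ℂ) * Complex.exp (θ * Complex.I))) :=
    hFc.comp_continuous hgc hmemU
  have step1 := sq_intInt_le Real.two_pi_pos hHc
  have step2 : (∫ θ in (0:ℝ)..(2 * π),
      ‖(fderiv ℝ u ((ρ₀ : ℂ) * Complex.exp (θ * Complex.I)))
        ((ρ₀ : ℂ) * Complex.exp (θ * Complex.I) * Complex.I)‖ ^ 2)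
      ≤ ∫ θ in (0:ℝ)..(2 * π), ρ₀ ^ 2 * F ((ρ₀ : ℂ) * Complex.exp (θ * Complex.I)) := by
    apply intervalIntegral.integral_mono_on Real.two_pi_pos.le
      ((hHc.pow 2).intervalIntegrable _ _)
      ((continuous_const.mul hFthc).intervalIntegrable _ _)
    intro θ _
    exact hbound ρ₀ hρ₀ θ
  have step3 : (∫ θ in (0:ℝ)..(2 * π), ρ₀ ^ 2 * F ((ρ₀ : ℂ) * Complex.exp (θ * Complex.I)))
      = m := by
    rw [hmdef, hΦdef, intervalIntegral.integral_const_mul]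
  have hmle : m ≤ (∫ z in S, F z) / Real.log (b / a) := (le_div_iff₀ hlog).mpr hmE
  have hfinal : (2 * π) * m ≤ (2 * π / Real.log (b / a)) * ∫ z in S, F z := by
    rw [div_mul_eq_mul_div, mul_div_assoc]
    exact mul_le_mul_of_nonneg_left hmle (by positivity)
  calc (∫ θ in (0:ℝ)..(2 * π),
        ‖(fderiv ℝ u ((ρ₀ : ℂ) * Complex.exp (θ * Complex.I)))
          ((ρ₀ : ℂ) * Complex.exp (θ * Complex.I) * Complex.I)‖) ^ 2
      ≤ (2 * π) * ∫ θ in (0:ℝ)..(2 * π),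
          ‖(fderiv ℝ u ((ρ₀ : ℂ) * Complex.exp (θ * Complex.I)))
            ((ρ₀ : ℂ) * Complex.exp (θ * Complex.I) * Complex.I)‖ ^ 2 := step1
    _ ≤ (2 * π) * ∫ θ in (0:ℝ)..(2 * π),
          ρ₀ ^ 2 * F ((ρ₀ : ℂ) * Complex.exp (θ * Complex.I)) := by
        exact mul_le_mul_of_nonneg_left step2 (by positivity)
    _ = (2 * π) * m := by rw [step3]
    _ ≤ (2 * π / Real.log (b / a)) * ∫ z in S, F z := hfinal
end

section
/- Existence of a compatible complex structure: let V be a finite-dimensional real inner product space and let ω : V × V → ℝ be a bilinear form which is skew-symmetric (ω(v,w) = −ω(w,v)) and nondegenerate (for every w ≠ 0 there exists v with ω(w,v) ≠ 0). Then there exists a linear map J : V → V with J ∘ J = −id such that the bilinear form μ(v,w) := ω(v, Jw) is symmetric and positive definite, i.e., μ is an inner product on V. -/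
open Module InnerProductSpace
open scoped RealInnerProductSpace

/-- Existence of a compatible linear complex structure on a symplectic vector
space: if `ω` is a skew-symmetric nondegenerate bilinear form on a
finite-dimensional real inner product space `V`, then there is a linear map
`J : V → V` with `J² = −id` such that `μ(v,w) := ω(v, Jw)` is symmetric and
positive definite. -/
theorem exists_compatible_complex_structure
    (V : Type*) [NormedAddCommGroup V] [InnerProductSpace ℝ V]
    [FiniteDimensional ℝ V]
    (ω : V →ₗ[ℝ] V →ₗ[ℝ] ℝ)
    (hskew : ∀ v w, ω v w = -ω w v)
    (hnd : ∀ w : V, w ≠ 0 → ∃ v, ω w v ≠ 0) :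
    ∃ J : V →ₗ[ℝ] V, (∀ v, J (J v) = -v) ∧
      (∀ v w, ω v (J w) = ω w (J v)) ∧
      (∀ v : V, v ≠ 0 → 0 < ω v (J v)) := by
  classical
  -- the operator A with ⟪A v, w⟫ = ω v w
  let A : V →ₗ[ℝ] V :=
    (InnerProductSpace.toDual ℝ V).symm.toLinearEquiv.toLinearMap ∘ₗ
      (LinearMap.toContinuousLinearMap : (V →ₗ[ℝ] ℝ) ≃ₗ[ℝ] (V →L[ℝ] ℝ)).toLinearMap ∘ₗ ω
  have hA : ∀ v w : V, ⟪A v, w⟫ = ω v w := by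
    intro v w
    simp [A, InnerProductSpace.toDual_symm_apply]
  have hAinj : ∀ x : V, A x = 0 → x = 0 := by
    intro x hx
    by_contra h
    obtain ⟨v, hv⟩ := hnd x h
    apply hv
    rw [← hA, hx, inner_zero_left]
  -- T = -A² is symmetric positive definite
  set T : V →ₗ[ℝ] V := -(A ∘ₗ A) with hTdef
  have hTapp : ∀ x, T x = -A (A x) := fun x => rfl
  have hTA : ∀ x y, ⟪T x, y⟫ = ⟪A x, A y⟫ := by
    intro x y
    have h1 : ⟪A (A x), y⟫ = ω (A x) y := hA _ _
    have h2 : ⟪A y, A x⟫ = ω y (A x) := hA _ _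
    rw [hTapp, inner_neg_left, h1, hskew, ← h2, real_inner_comm]
    ring
  have hTsym : T.IsSymmetric := by
    intro x y
    have h1 : ⟪x, T y⟫ = ⟪T y, x⟫ := real_inner_comm _ _
    have h2 : ⟪T y, x⟫ = ⟪A y, A x⟫ := hTA _ _
    have h3 : ⟪A y, A x⟫ = ⟪A x, A y⟫ := real_inner_comm _ _
    rw [hTA]
    linarith
  set b := hTsym.eigenvectorBasis rfl with hb
  set μ := hTsym.eigenvalues (n := finrank ℝ V) rfl with hμ
  have hTb : ∀ i, T (b i) = μ i • b i := fun i => hTsym.apply_eigenvectorBasis rfl i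
  have hμpos : ∀ i, 0 < μ i := by
    intro i
    have hbne : b i ≠ 0 := b.toBasis.ne_zero i
    have h1 : ⟪T (b i), b i⟫ = μ i := by
      rw [hTb, real_inner_smul_left, real_inner_self_eq_norm_sq, b.orthonormal.1 i]
      simp
    have h2 : ⟪T (b i), b i⟫ = ‖A (b i)‖ ^ 2 := by
      rw [hTA, real_inner_self_eq_norm_sq]
    have h3 : A (b i) ≠ 0 := fun h => hbne (hAinj _ h)
    rw [h2] at h1
    rw [← h1]
    exact pow_pos (norm_pos_iff.mpr h3) 2
  -- R = (sqrt T)⁻¹, defined on the eigenbasis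
  set R : V →ₗ[ℝ] V := b.toBasis.constr ℝ (fun i => (Real.sqrt (μ i))⁻¹ • b i) with hR
  have hRb : ∀ i, R (b i) = (Real.sqrt (μ i))⁻¹ • b i := by
    intro i
    rw [hR]
    have := b.toBasis.constr_basis ℝ (fun i => (Real.sqrt (μ i))⁻¹ • b i) i
    rwa [OrthonormalBasis.coe_toBasis] at this
  -- R acts as (sqrt μ)⁻¹ on each eigenspace of T
  have heig : ∀ (c : ℝ) (x : V), T x = c • x → R x = (Real.sqrt c)⁻¹ • x := by
    intro c x hx
    have hexp : ∑ i, ⟪b i, x⟫ • b i = x := b.sum_repr' x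
    have hcoef : ∀ i, ⟪b i, x⟫ ≠ 0 → μ i = c := by
      intro i hne
      have h1 : ⟪T (b i), x⟫ = μ i * ⟪b i, x⟫ := by rw [hTb, real_inner_smul_left]
      have h2 : ⟪T (b i), x⟫ = c * ⟪b i, x⟫ := by
        rw [hTsym (b i) x, hx, real_inner_smul_right]
      have := h1.symm.trans h2
      exact mul_right_cancel₀ hne (by linarith)
    calc R x = R (∑ i, ⟪b i, x⟫ • b i) := by rw [hexp]
      _ = ∑ i, ⟪b i, x⟫ • ((Real.sqrt (μ i))⁻¹ • b i) := by
          rw [map_sum]; simp_rw [map_smul, hRb]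
      _ = ∑ i, ⟪b i, x⟫ • ((Real.sqrt c)⁻¹ • b i) := by
          apply Finset.sum_congr rfl
          intro i _
          by_cases h : ⟪b i, x⟫ = 0
          · rw [h, zero_smul, zero_smul]
          · rw [hcoef i h]
      _ = (Real.sqrt c)⁻¹ • x := by
          conv_rhs => rw [← hexp]
          rw [Finset.smul_sum]
          exact Finset.sum_congr rfl fun i _ => smul_comm _ _ _
  -- A and R commute
  have hcomm : ∀ x, A (R x) = R (A x) := by
    intro x
    have : A ∘ₗ R = R ∘ₗ A := by
      apply b.toBasis.ext
      intro i
      rw [OrthonormalBasis.coe_toBasis]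
      have hTAb : T (A (b i)) = μ i • A (b i) := by
        have h0 : T (A (b i)) = A (T (b i)) := by rw [hTapp, hTapp, map_neg]
        rw [h0, hTb, map_smul]
      simp only [LinearMap.comp_apply]
      rw [heig (μ i) (A (b i)) hTAb, hRb, map_smul]
    exact LinearMap.congr_fun this x
  -- inner product formula for R
  have hRsum : ∀ x y : V, ⟪R x, y⟫ = ∑ i, (Real.sqrt (μ i))⁻¹ * (⟪b i, x⟫ * ⟪b i, y⟫) := by
    intro x y
    conv_lhs => rw [← b.sum_repr' x]
    rw [map_sum, sum_inner]
    apply Finset.sum_congr rfl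
    intro i _
    rw [map_smul, hRb, real_inner_smul_left, real_inner_smul_left]
    ring
  have hRsym : ∀ x y : V, ⟪R x, y⟫ = ⟪x, R y⟫ := by
    intro x y
    have h1 : ⟪x, R y⟫ = ⟪R y, x⟫ := real_inner_comm _ _
    rw [h1, hRsum, hRsum]
    exact Finset.sum_congr rfl fun i _ => by ring
  have hRpos : ∀ x : V, x ≠ 0 → 0 < ⟪R x, x⟫ := by
    intro x hx
    rw [hRsum]
    have hex : ∃ i, ⟪b i, x⟫ ≠ 0 := by
      by_contra h
      push_neg at h
      apply hx
      rw [← b.sum_repr' x]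
      simp [h]
    obtain ⟨i, hi⟩ := hex
    apply Finset.sum_pos'
    · intro j _
      have h1 : (0:ℝ) < Real.sqrt (μ j) := Real.sqrt_pos.mpr (hμpos j)
      have h2 : 0 ≤ ⟪b j, x⟫ * ⟪b j, x⟫ := mul_self_nonneg _
      exact mul_nonneg (inv_nonneg.mpr h1.le) h2
    · refine ⟨i, Finset.mem_univ i, ?_⟩
      have h1 : (0:ℝ) < (Real.sqrt (μ i))⁻¹ :=
        inv_pos.mpr (Real.sqrt_pos.mpr (hμpos i))
      exact mul_pos h1 (mul_self_pos.mpr hi)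
  -- R ∘ R ∘ T = id
  have hRRT : ∀ x : V, R (R (T x)) = x := by
    intro x
    have : (R ∘ₗ R ∘ₗ T) = LinearMap.id := by
      apply b.toBasis.ext
      intro i
      rw [OrthonormalBasis.coe_toBasis]
      simp only [LinearMap.comp_apply, LinearMap.id_apply]
      rw [hTb, map_smul, hRb, map_smul, map_smul, hRb, smul_smul, smul_smul]
      have hs : Real.sqrt (μ i) * Real.sqrt (μ i) = μ i := Real.mul_self_sqrt (hμpos i).le
      have hsne : Real.sqrt (μ i) ≠ 0 := (Real.sqrt_pos.mpr (hμpos i)).ne'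
      rw [show μ i * (Real.sqrt (μ i))⁻¹ * (Real.sqrt (μ i))⁻¹ = 1 by
        field_simp
        rw [sq, hs]]
      rw [one_smul]
    exact LinearMap.congr_fun this x
  -- the complex structure
  refine ⟨R ∘ₗ A, ?_, ?_, ?_⟩
  · intro v
    show R (A (R (A v))) = -v
    rw [hcomm (A v)]
    have h2 : A (A v) = -(T v) := by rw [hTapp, neg_neg]
    rw [h2, map_neg, map_neg, hRRT]
  · intro v w
    simp only [LinearMap.comp_apply]
    rw [← hA, ← hA, hRsym (A w) (A v) |>.symm, real_inner_comm]
  · intro v hv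
    simp only [LinearMap.comp_apply]
    rw [← hA]
    have hAv : A v ≠ 0 := fun h => hv (hAinj v h)
    have := hRpos (A v) hAv
    rwa [real_inner_comm]
end

section
/- Isoperimetric bound for the symplectic area of a cone over a loop in ℂⁿ: let γ : ℝ → ℂⁿ be a C¹ map which is 2π-periodic and satisfies γ(0) = 0. Then |(1/2)·∫₀^{2π} ω_std(γ(θ), γ'(θ)) dθ| ≤ (1/4)·(∫₀^{2π} ‖γ'(θ)‖ dθ)², i.e., the symplectic area enclosed by the cone Φ(r,θ) = r·γ(θ), 0 ≤ r ≤ 1, over the loop γ is bounded by a universal constant times the square of the length of γ. -/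
open MeasureTheory Real

/-- The standard symplectic form on `ℂⁿ ≅ ℝ^{2n}`. -/
noncomputable def omegaStd (n : ℕ) (v w : EuclideanSpace ℂ (Fin n)) : ℝ :=
  ∑ k, ((v k).re * (w k).im - (v k).im * (w k).re)

lemma omega_eq (n : ℕ) (v w : EuclideanSpace ℂ (Fin n)) :
    omegaStd n v w = (inner ℂ v w).im := by
  simp [omegaStd, PiLp.inner_apply, RCLike.inner_apply, Complex.im_sum, Complex.mul_im,
    mul_comm, Finset.sum_sub_distrib, Finset.sum_add_distrib, sub_eq_neg_add, add_comm]

lemma abs_omega_le (n : ℕ) (v w : EuclideanSpace ℂ (Fin n)) :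
    |omegaStd n v w| ≤ ‖v‖ * ‖w‖ := by
  rw [omega_eq]
  calc |(inner ℂ v w).im| ≤ ‖(inner ℂ v w)‖ := Complex.abs_im_le_norm _
    _ ≤ ‖v‖ * ‖w‖ := norm_inner_le_norm v w

/-- Isoperimetric bound for the symplectic area of the cone over a loop in `ℂⁿ`:
for a `2π`-periodic `C¹` loop `γ` with `γ(0) = 0`, the symplectic area
`(1/2)∫₀^{2π} ω_std(γ(θ), γ'(θ)) dθ` of the cone over `γ` is bounded in absolute
value by `(1/4)` times the square of the length of `γ`. -/
theorem cone_symplectic_area_le_length_sq (n : ℕ)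
    (γ : ℝ → EuclideanSpace ℂ (Fin n))
    (hγ : ContDiff ℝ 1 γ)
    (hper : Function.Periodic γ (2 * π))
    (h0 : γ 0 = 0) :
    |(1 / 2) * ∫ θ in (0 : ℝ)..(2 * π), omegaStd n (γ θ) (deriv γ θ)| ≤
      (1 / 4) * (∫ θ in (0 : ℝ)..(2 * π), ‖deriv γ θ‖) ^ 2 := by
  have hd : Continuous (deriv γ) := hγ.continuous_deriv le_rfl
  have hγc : Continuous γ := hγ.continuous
  set g : ℝ → ℝ := fun θ => ‖deriv γ θ‖ with hg_def
  have hg : Continuous g := hd.norm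
  set s : ℝ → ℝ := fun θ => ∫ t in (0:ℝ)..θ, g t with hs_def
  have hs_deriv : ∀ θ : ℝ, HasDerivAt s (g θ) θ := fun θ =>
    intervalIntegral.integral_hasDerivAt_right (hg.intervalIntegrable _ _)
      (hg.stronglyMeasurableAtFilter _ _) hg.continuousAt
  have hs_cont : Continuous s :=
    continuous_iff_continuousAt.2 fun θ => (hs_deriv θ).continuousAt
  -- FTC: γ θ = ∫ deriv γ
  have hγderiv : ∀ θ : ℝ, HasDerivAt γ (deriv γ θ) θ := fun θ =>
    (hγ.differentiable one_ne_zero θ).hasDerivAt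
  have hnorm_le : ∀ θ ∈ Set.Icc (0:ℝ) (2 * π), ‖γ θ‖ ≤ s θ := by
    intro θ hθ
    have hFTC : ∫ t in (0:ℝ)..θ, deriv γ t = γ θ - γ 0 :=
      intervalIntegral.integral_eq_sub_of_hasDerivAt
        (fun t _ => hγderiv t) (hd.intervalIntegrable _ _)
    have : γ θ = ∫ t in (0:ℝ)..θ, deriv γ t := by rw [hFTC, h0, sub_zero]
    rw [this]
    exact intervalIntegral.norm_integral_le_integral_norm hθ.1
  have hs_nonneg : ∀ θ ∈ Set.Icc (0:ℝ) (2 * π), 0 ≤ s θ := fun θ hθ =>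
    intervalIntegral.integral_nonneg hθ.1 (fun t _ => norm_nonneg _)
  -- pointwise bound
  have hpt : ∀ θ ∈ Set.Icc (0:ℝ) (2 * π),
      |omegaStd n (γ θ) (deriv γ θ)| ≤ s θ * g θ := by
    intro θ hθ
    calc |omegaStd n (γ θ) (deriv γ θ)| ≤ ‖γ θ‖ * ‖deriv γ θ‖ := abs_omega_le n _ _
      _ ≤ s θ * g θ := by
          exact mul_le_mul_of_nonneg_right (hnorm_le θ hθ) (norm_nonneg _)
  -- continuity of the integrands
  have homega_cont : Continuous fun θ => omegaStd n (γ θ) (deriv γ θ) := by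
    have : Continuous fun θ => (inner ℂ (γ θ) (deriv γ θ)) := hγc.inner hd
    simp only [omega_eq]
    exact Complex.continuous_im.comp this
  have hsg_cont : Continuous fun θ => s θ * g θ := hs_cont.mul hg
  have hpi : (0:ℝ) ≤ 2 * π := by positivity
  -- |∫ ω| ≤ ∫ s g
  have h1 : |∫ θ in (0:ℝ)..(2 * π), omegaStd n (γ θ) (deriv γ θ)| ≤
      ∫ θ in (0:ℝ)..(2 * π), s θ * g θ := by
    calc |∫ θ in (0:ℝ)..(2 * π), omegaStd n (γ θ) (deriv γ θ)|
        ≤ ∫ θ in (0:ℝ)..(2 * π), |omegaStd n (γ θ) (deriv γ θ)| := by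
          exact intervalIntegral.abs_integral_le_integral_abs hpi
      _ ≤ ∫ θ in (0:ℝ)..(2 * π), s θ * g θ := by
          apply intervalIntegral.integral_mono_on hpi
            (homega_cont.abs.intervalIntegrable _ _) (hsg_cont.intervalIntegrable _ _)
          exact hpt
  -- ∫ s g = s(2π)^2 / 2
  have h2 : ∫ θ in (0:ℝ)..(2 * π), s θ * g θ = s (2 * π) ^ 2 / 2 := by
    have hF : ∀ θ ∈ Set.uIcc (0:ℝ) (2 * π), HasDerivAt (fun t => s t ^ 2 / 2) (s θ * g θ) θ := by
      intro θ _
      have := ((hs_deriv θ).pow 2).div_const 2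
      refine this.congr_deriv ?_
      push_cast
      ring
    have := intervalIntegral.integral_eq_sub_of_hasDerivAt hF
      (hsg_cont.intervalIntegrable _ _)
    have hs0 : s 0 = 0 := by simp [hs_def]
    rw [this, hs0]
    ring
  -- length nonneg, conclude
  have hL : s (2 * π) = ∫ θ in (0:ℝ)..(2 * π), ‖deriv γ θ‖ := rfl
  rw [abs_mul, ← hL]
  have : |(1:ℝ)/2| = 1/2 := by norm_num
  rw [this]
  have hLnn : 0 ≤ s (2 * π) := hs_nonneg _ ⟨hpi, le_rfl⟩
  nlinarith [h1, h2]
end
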